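/- arXiv:2212.14871 — 5 statements merged into one kernel-verified Lean document; each statement's English description precedes it below -/
import Mathlib

section
/- Let s_a map each unit vector d ∈ ℝ³ to an element s_a(d) ∈ SO(3) with s_a(d)·e₃ = d, and define the section s((d,m)) = (s_a(d), d × m) of the ray space. Then for every g = (R,t) ∈ SE(3) and every ray x = (d,m) ∈ 𝓡, the twist equals h(g,x) = s(g·x)⁻¹·g·s(x) = (s_a(Rd)⁻¹·R·s_a(d), ⟨t, Rd⟩·e₃); in particular its translation component is ⟨t, Rd⟩·e₃. -/
/-!
Put `d' = Rd` and `m' = Rm + t × d'`. Rotations commute with the cross product and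
`d' × (t × d') = t - ⟨t, d'⟩ d'` for a unit vector `d'`, so `d' × m' = R(d × m) + t - ⟨t, d'⟩ d'`.
The translation part of the twist is `s_a(d')ᵀ (t + R(d × m) - d' × m') = ⟨t, d'⟩ s_a(d')ᵀ d'`,
and `s_a(d')ᵀ d' = s_a(d')ᵀ s_a(d') e₃ = e₃`.
-/

noncomputable section
open scoped InnerProductSpace

/-- ℝ³ with the Euclidean norm. -/
abbrev E3 : Type := EuclideanSpace ℝ (Fin 3)

/-- Elements of SE(3): a pair of a 3×3 matrix and a translation vector. -/
abbrev SE3 : Type := Matrix (Fin 3) (Fin 3) ℝ × E3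

/-- Matrix-vector multiplication on ℝ³. -/
def mv (R : Matrix (Fin 3) (Fin 3) ℝ) (v : E3) : E3 := WithLp.toLp 2 (R.mulVec v)

/-- Cross product on ℝ³. -/
def cross3 (a b : E3) : E3 :=
  WithLp.toLp 2 ![a 1 * b 2 - a 2 * b 1, a 2 * b 0 - a 0 * b 2, a 0 * b 1 - a 1 * b 0]

/-- `R` is a special orthogonal 3×3 matrix: `RᵀR = I` and `det R = 1`. -/
def isSO3 (R : Matrix (Fin 3) (Fin 3) ℝ) : Prop :=
  R.transpose * R = 1 ∧ R.det = 1

/-- `(d, m)` are Plücker coordinates of an oriented line: `d` is a unit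
direction and `m` is a moment with `⟨d, m⟩ = 0`. -/
def isRay (d m : E3) : Prop := ‖d‖ = 1 ∧ ⟪d, m⟫_ℝ = 0

/-- The standard basis vector e₁. -/
def e1 : E3 := WithLp.toLp 2 ![1, 0, 0]

/-- The standard basis vector e₂. -/
def e2 : E3 := WithLp.toLp 2 ![0, 1, 0]

/-- The standard basis vector e₃. -/
def e3 : E3 := WithLp.toLp 2 ![0, 0, 1]

/-- Action of `(R, t) ∈ SE(3)` on Plücker coordinates:
`(R,t)·(d,m) = (Rd, Rm + t × (Rd))`. -/
def rayAct (R : Matrix (Fin 3) (Fin 3) ℝ) (t : E3) (d m : E3) : E3 × E3 :=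
  (mv R d, mv R m + cross3 t (mv R d))

/-- Multiplication in SE(3): `(R₁,t₁)·(R₂,t₂) = (R₁R₂, t₁ + R₁t₂)`. -/
def se3Mul (g₁ g₂ : SE3) : SE3 := (g₁.1 * g₂.1, g₁.2 + mv g₁.1 g₂.2)

/-- Inverse in SE(3) (for `g.1 ∈ SO(3)`): `(R,t)⁻¹ = (Rᵀ, -Rᵀt)`. -/
def se3Inv (g : SE3) : SE3 := (g.1.transpose, -(mv g.1.transpose g.2))

/-- Action of `g ∈ SE(3)` on the ray space. -/
def act (g : SE3) (x : E3 × E3) : E3 × E3 := rayAct g.1 g.2 x.1 x.2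

/-- Action of `g = (R,t) ∈ SE(3)` on points of ℝ³: `g·p = Rp + t`. -/
def actPt (g : SE3) (p : E3) : E3 := mv g.1 p + g.2

/-- The origin ray `η = (e₃, 0)`. -/
def eta : E3 × E3 := (e3, 0)

/-- The twist `h(g, x) = s(g·x)⁻¹ · g · s(x)` of a section `s`. -/
def twist (s : E3 × E3 → SE3) (g : SE3) (x : E3 × E3) : SE3 :=
  se3Mul (se3Inv (s (act g x))) (se3Mul g (s x))

/-- Rotation by γ about the z-axis. -/
def RZ (γ : ℝ) : Matrix (Fin 3) (Fin 3) ℝ :=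
  !![Real.cos γ, -Real.sin γ, 0; Real.sin γ, Real.cos γ, 0; 0, 0, 1]

/-- Rotation by β about the y-axis. -/
def RY (β : ℝ) : Matrix (Fin 3) (Fin 3) ℝ :=
  !![Real.cos β, 0, Real.sin β; 0, 1, 0; -Real.sin β, 0, Real.cos β]

/-- The underlying line of the ray with Plücker coordinates `(d, m)`:
`L(d,m) = {p : p × d = m}`. -/
def lineOf (d m : E3) : Set E3 := {p : E3 | cross3 p d = m}

/-- Infimum of the Euclidean distances between points of the line `L(d,m)`
and points of the z-axis. -/
def Dzaxis (d m : E3) : ℝ :=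
  sInf {r : ℝ | ∃ p ∈ lineOf d m, ∃ s : ℝ, r = dist p (s • e3)}

/-- The z-coordinate `g(x) = e₃·(c - λ·d)` (with `c = d × m` and
`λ = ((e₁·c)(e₁·d) + (e₂·c)(e₂·d))/(1 - (e₃·d)²)`) of the point of `L(d,m)`
closest to the z-axis (for `d ≠ ±e₃`). -/
def zfoot (d m : E3) : ℝ :=
  ⟪e3, cross3 d m - ((⟪e1, cross3 d m⟫_ℝ * ⟪e1, d⟫_ℝ + ⟪e2, cross3 d m⟫_ℝ * ⟪e2, d⟫_ℝ)
      / (1 - ⟪e3, d⟫_ℝ ^ 2)) • d⟫_ℝ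

open Matrix

theorem Matrix.mulVec_cross_mulVec {K : Type*} [CommRing K] (A : Matrix (Fin 3) (Fin 3) K)
    (u v : Fin 3 → K) : (A *ᵥ u) ⨯₃ (A *ᵥ v) = A.adjugateᵀ *ᵥ (u ⨯₃ v) := by
  ext i
  fin_cases i <;>
  · simp only [Fin.zero_eta, Fin.mk_one, Fin.reduceFinMk, Fin.isValue, cross_apply, mulVec,
      dotProduct, Fin.sum_univ_three, adjugate_fin_three, transpose_apply, of_apply, cons_val',
      cons_val_fin_one, cons_val_zero, cons_val_one, cons_val]
    ring

lemma mv_sub (A : Matrix (Fin 3) (Fin 3) ℝ) (u v : E3) : mv A (u - v) = mv A u - mv A v := by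
  simp [mv, mulVec_sub]

lemma mv_smul (A : Matrix (Fin 3) (Fin 3) ℝ) (c : ℝ) (v : E3) : mv A (c • v) = c • mv A v := by
  simp [mv, mulVec_smul]

lemma mv_mv (A B : Matrix (Fin 3) (Fin 3) ℝ) (v : E3) : mv A (mv B v) = mv (A * B) v := by
  simp [mv, mulVec_mulVec]

lemma mv_one (v : E3) : mv 1 v = v := by
  simp [mv]

lemma inner_eq_dotProduct (u v : E3) : ⟪u, v⟫_ℝ = u.ofLp ⬝ᵥ v.ofLp := by
  simp [EuclideanSpace.inner_eq_star_dotProduct, dotProduct_comm]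

lemma cross3_eq_crossProduct (a b : E3) : cross3 a b = WithLp.toLp 2 (a.ofLp ⨯₃ b.ofLp) := rfl

lemma cross3_add_right (a b c : E3) : cross3 a (b + c) = cross3 a b + cross3 a c := by
  simp [cross3_eq_crossProduct]

lemma cross3_cross3_self (a b : E3) (ha : ‖a‖ = 1) :
    cross3 a (cross3 b a) = b - ⟪b, a⟫_ℝ • a := by
  have haa : a.ofLp ⬝ᵥ a.ofLp = 1 := by
    rw [← inner_eq_dotProduct, real_inner_self_eq_norm_sq, ha, one_pow]
  simp [cross3_eq_crossProduct, cross_cross_eq_smul_sub_smul', haa, inner_eq_dotProduct,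
    dotProduct_comm]

lemma inner_mv_mv_of_transpose_mul_self {A : Matrix (Fin 3) (Fin 3) ℝ} (hA : Aᵀ * A = 1)
    (u v : E3) : ⟪mv A u, mv A v⟫_ℝ = ⟪u, v⟫_ℝ := by
  simp only [inner_eq_dotProduct, mv, dotProduct_mulVec, ← mulVec_transpose, mulVec_mulVec,
    hA, one_mulVec]

lemma norm_mv_of_transpose_mul_self {A : Matrix (Fin 3) (Fin 3) ℝ} (hA : Aᵀ * A = 1) (v : E3) :
    ‖mv A v‖ = ‖v‖ := by
  rw [norm_eq_sqrt_real_inner, norm_eq_sqrt_real_inner, inner_mv_mv_of_transpose_mul_self hA]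

lemma isSO3.adjugate_eq {R : Matrix (Fin 3) (Fin 3) ℝ} (hR : isSO3 R) : R.adjugate = Rᵀ :=
  calc R.adjugate = Rᵀ * (R * R.adjugate) := by rw [← Matrix.mul_assoc, hR.1, Matrix.one_mul]
    _ = Rᵀ := by rw [mul_adjugate, hR.2, one_smul, Matrix.mul_one]

lemma isSO3.cross3_mv {R : Matrix (Fin 3) (Fin 3) ℝ} (hR : isSO3 R) (a b : E3) :
    cross3 (mv R a) (mv R b) = mv R (cross3 a b) := by
  simp [cross3_eq_crossProduct, mv, mulVec_cross_mulVec, hR.adjugate_eq]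

lemma se3Mul_se3Inv_mk (Q : Matrix (Fin 3) (Fin 3) ℝ) (a : E3) (g : SE3) :
    se3Mul (se3Inv (Q, a)) g = (Qᵀ * g.1, mv Qᵀ (g.2 - a)) := by
  simp only [se3Mul, se3Inv, mv_sub, neg_add_eq_sub]

lemma cross3_act {R : Matrix (Fin 3) (Fin 3) ℝ} (hR : isSO3 R) (t : E3) {d : E3} (hd : ‖d‖ = 1)
    (m : E3) :
    cross3 (act (R, t) (d, m)).1 (act (R, t) (d, m)).2
      = mv R (cross3 d m) + t - ⟪t, mv R d⟫_ℝ • mv R d := by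
  have hRd : ‖mv R d‖ = 1 := by rw [norm_mv_of_transpose_mul_self hR.1, hd]
  rw [act, rayAct, cross3_add_right, hR.cross3_mv, cross3_cross3_self _ _ hRd, add_sub_assoc]

/-- for the section `s((d,m)) = (s_a(d), d × m)`, the twist of
`g = (R,t)` at `x = (d,m)` equals `(s_a(Rd)⁻¹·R·s_a(d), ⟨t, Rd⟩·e₃)`. -/
theorem statement6 (sa : E3 → Matrix (Fin 3) (Fin 3) ℝ)
    (hsa : ∀ u : E3, ‖u‖ = 1 → isSO3 (sa u) ∧ mv (sa u) e3 = u)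
    (R : Matrix (Fin 3) (Fin 3) ℝ) (t : E3) (hR : isSO3 R)
    (d m : E3) (h : isRay d m) :
    twist (fun x => (sa x.1, cross3 x.1 x.2)) (R, t) (d, m)
      = ((sa (mv R d)).transpose * R * sa d, ⟪t, mv R d⟫_ℝ • e3) := by
  set d' := mv R d
  have hd' : ‖d'‖ = 1 := by rw [norm_mv_of_transpose_mul_self hR.1, h.1]
  obtain ⟨hQ, hQe3⟩ := hsa d' hd'
  rw [twist, se3Mul_se3Inv_mk]
  refine Prod.ext (Matrix.mul_assoc _ _ _).symm ?_
  calc mv (sa d')ᵀ (t + mv R (cross3 d m) - cross3 (act (R, t) (d, m)).1 (act (R, t) (d, m)).2)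
      = mv (sa d')ᵀ (⟪t, d'⟫_ℝ • d') := by
        rw [cross3_act hR t h.1]; congr 1; abel
    _ = ⟪t, d'⟫_ℝ • mv (sa d')ᵀ (mv (sa d') e3) := by rw [mv_smul, hQe3]
    _ = ⟪t, d'⟫_ℝ • e3 := by rw [mv_mv, hQ.1, mv_one]

end
end

section
/- For every ray x = (d,m) ∈ 𝓡 with d ≠ ±e₃ and all γ, t ∈ ℝ, the transformed ray (R_Z(γ), t·e₃)·x also has direction ≠ ±e₃, and g((R_Z(γ), t·e₃)·x) = t + g(x). -/
noncomputable section
open scoped InnerProductSpace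

/-! The rotation `R_Z(γ)` fixes the `z`-coordinate of the direction and preserves the planar
moment `d₀m₁ - d₁m₀`; the translation `t·e₃` adds `t (d₀² + d₁²) = t (1 - d₂²)` to it. Since `g`
is the planar moment divided by `1 - d₂²`, it is shifted by exactly `t`. -/

lemma sum_sq_coord_eq_one {d : E3} (hd : ‖d‖ = 1) : d 0 ^ 2 + d 1 ^ 2 + d 2 ^ 2 = 1 := by
  have hdd : ⟪d, d⟫_ℝ = 1 := by rw [real_inner_self_eq_norm_sq, hd, one_pow]
  rw [PiLp.inner_apply, Fin.sum_univ_three] at hdd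
  simpa only [RCLike.inner_apply, conj_trivial, sq] using hdd

lemma eq_e3_or_eq_neg_e3_of_sq_coord_two_eq_one {d : E3} (hd : ‖d‖ = 1) (h : d 2 ^ 2 = 1) :
    d = e3 ∨ d = -e3 := by
  have hsum := sum_sq_coord_eq_one hd
  have h0 : d 0 = 0 := by nlinarith [sq_nonneg (d 0), sq_nonneg (d 1)]
  have h1 : d 1 = 0 := by nlinarith [sq_nonneg (d 0), sq_nonneg (d 1)]
  rcases sq_eq_one_iff.mp h with h2 | h2
  · left; ext i; fin_cases i <;> simp [e3, h0, h1, h2]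
  · right; ext i; fin_cases i <;> simp [e3, h0, h1, h2]

lemma ne_e3_and_ne_neg_e3_of_sq_coord_two_ne_one {d : E3} (h : d 2 ^ 2 ≠ 1) :
    d ≠ e3 ∧ d ≠ -e3 := by
  constructor <;> rintro rfl <;> simp [e3] at h

lemma zfoot_eq_div {d : E3} (m : E3) (h : d 2 ^ 2 ≠ 1) :
    zfoot d m = (d 0 * m 1 - d 1 * m 0) / (1 - d 2 ^ 2) := by
  have h' : 1 - d 2 ^ 2 ≠ 0 := sub_ne_zero.mpr (Ne.symm h)
  simp only [zfoot, e1, e2, e3, cross3, PiLp.inner_apply, RCLike.inner_apply, Real.ringHom_apply,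
    Fin.sum_univ_three, Matrix.cons_val_zero, Matrix.cons_val_one, Matrix.cons_val, PiLp.sub_apply,
    PiLp.smul_apply, smul_eq_mul, mul_one, mul_zero, add_zero, zero_add]
  field_simp
  ring

section RotationTranslationZ

variable (γ t : ℝ) (d m : E3)

lemma rayAct_RZ_fst_two : (rayAct (RZ γ) (t • e3) d m).1 2 = d 2 := by
  simp [rayAct, mv, RZ, dotProduct, Fin.sum_univ_three]

lemma rayAct_RZ_planarMoment :
    (rayAct (RZ γ) (t • e3) d m).1 0 * (rayAct (RZ γ) (t • e3) d m).2 1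
      - (rayAct (RZ γ) (t • e3) d m).1 1 * (rayAct (RZ γ) (t • e3) d m).2 0
      = t * (d 0 ^ 2 + d 1 ^ 2) + (d 0 * m 1 - d 1 * m 0) := by
  simp only [rayAct, mv, RZ, cross3, e3, Matrix.cons_mulVec, Matrix.empty_mulVec, dotProduct,
    Fin.sum_univ_three, Matrix.cons_val_zero, Matrix.cons_val_one, Matrix.cons_val, PiLp.add_apply,
    PiLp.smul_apply, smul_eq_mul, neg_mul, zero_mul, one_mul, mul_zero, mul_one, add_zero, zero_add,
    zero_sub, sub_zero, sub_self]
  linear_combination (t * (d 0 ^ 2 + d 1 ^ 2) + d 0 * m 1 - d 1 * m 0) * Real.cos_sq_add_sin_sq γ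

end RotationTranslationZ

/-- for a ray `x = (d,m)` with `d ≠ ±e₃` and a stabilizer element
`(R_Z(γ), t·e₃)`, the transformed ray also has direction `≠ ±e₃` and
`g((R_Z(γ), t·e₃)·x) = t + g(x)`. -/
theorem statement9 (d m : E3) (h : isRay d m) (h1 : d ≠ e3) (h2 : d ≠ -e3)
    (γ t : ℝ) :
    ((rayAct (RZ γ) (t • e3) d m).1 ≠ e3 ∧ (rayAct (RZ γ) (t • e3) d m).1 ≠ -e3) ∧
    zfoot (rayAct (RZ γ) (t • e3) d m).1 (rayAct (RZ γ) (t • e3) d m).2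
      = t + zfoot d m := by
  have hd : d 2 ^ 2 ≠ 1 := fun hd ↦
    (eq_e3_or_eq_neg_e3_of_sq_coord_two_eq_one h.1 hd).elim h1 h2
  have hd' : (rayAct (RZ γ) (t • e3) d m).1 2 ^ 2 ≠ 1 := by rwa [rayAct_RZ_fst_two]
  refine ⟨ne_e3_and_ne_neg_e3_of_sq_coord_two_ne_one hd', ?_⟩
  have hplanar : d 0 ^ 2 + d 1 ^ 2 = 1 - d 2 ^ 2 := by linarith [sum_sq_coord_eq_one h.1]
  have hden : 1 - d 2 ^ 2 ≠ 0 := sub_ne_zero.mpr (Ne.symm hd)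
  rw [zfoot_eq_div _ hd', zfoot_eq_div _ hd, rayAct_RZ_fst_two, rayAct_RZ_planarMoment, hplanar]
  field_simp

end
end

section
/- Let ω ∈ ℤ and let F : ℝ × ℝ → ℂ be arbitrary. Define, for rays x = (d,m) ∈ 𝓡 with d ≠ ±e₃, κ₁(x) = F(D(x), ⟨e₃, d⟩)·exp(−i·ω·arg(d₁ + i·d₂)). Then for all γ, t ∈ ℝ and all such x: κ₁((R_Z(γ), t·e₃)·x) = exp(−i·ω·γ)·κ₁(x). -/
noncomputable section
open scoped InnerProductSpace

/-- The kernel `κ₁(x) = F(D(x), ⟨e₃, d⟩)·exp(−i·ω·arg(d₁ + i·d₂))`. -/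
def kappa1 (ω : ℤ) (F : ℝ × ℝ → ℂ) (x : E3 × E3) : ℂ :=
  F (Dzaxis x.1 x.2, ⟪e3, x.1⟫_ℝ) *
    Complex.exp (-Complex.I * (ω : ℂ) *
      (Complex.arg ((x.1 0 : ℂ) + (x.1 1 : ℂ) * Complex.I) : ℂ))

/-!
The screw motion `p ↦ R_Z(γ) p + t e₃` preserves the z-axis and distances and carries the line of
`x` onto the line of `(R_Z(γ), t e₃)·x`, so `D` and `⟨e₃, d⟩` are invariant. On the horizontal
part of the direction it acts as multiplication of `d₁ + i d₂` by `exp(iγ)`, which, as long as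
`d ≠ ±e₃` keeps this number nonzero, shifts its argument by `γ` modulo `2π`; since `ω` is an
integer, `exp(−iω arg ·)` only sees the argument modulo `2π`.
-/

@[simp] lemma mv_RZ_apply_zero (γ : ℝ) (v : E3) :
    mv (RZ γ) v 0 = Real.cos γ * v 0 - Real.sin γ * v 1 := by
  simp [mv, RZ, dotProduct, Fin.sum_univ_three]; ring

@[simp] lemma mv_RZ_apply_one (γ : ℝ) (v : E3) :
    mv (RZ γ) v 1 = Real.sin γ * v 0 + Real.cos γ * v 1 := by
  simp [mv, RZ, dotProduct, Fin.sum_univ_three]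

@[simp] lemma mv_RZ_apply_two (γ : ℝ) (v : E3) : mv (RZ γ) v 2 = v 2 := by
  simp [mv, RZ, dotProduct, Fin.sum_univ_three]

@[simp] lemma cross3_apply_zero (a b : E3) : cross3 a b 0 = a 1 * b 2 - a 2 * b 1 := rfl
@[simp] lemma cross3_apply_one (a b : E3) : cross3 a b 1 = a 2 * b 0 - a 0 * b 2 := rfl
@[simp] lemma cross3_apply_two (a b : E3) : cross3 a b 2 = a 0 * b 1 - a 1 * b 0 := rfl

@[simp] lemma e3_apply_zero : e3 0 = 0 := rfl
@[simp] lemma e3_apply_one : e3 1 = 0 := rfl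
@[simp] lemma e3_apply_two : e3 2 = 1 := rfl

lemma E3.ext_fin_three {a b : E3} (h0 : a 0 = b 0) (h1 : a 1 = b 1) (h2 : a 2 = b 2) :
    a = b := by
  ext i; fin_cases i <;> assumption

lemma mv_add (R : Matrix (Fin 3) (Fin 3) ℝ) (a b : E3) : mv R (a + b) = mv R a + mv R b := by
  simp [mv, Matrix.mulVec_add]

lemma cross3_add_left (a b c : E3) : cross3 (a + b) c = cross3 a c + cross3 b c := by
  refine E3.ext_fin_three ?_ ?_ ?_ <;> simp <;> ring

lemma cross3_neg_left (a b : E3) : cross3 (-a) b = -cross3 a b := by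
  refine E3.ext_fin_three ?_ ?_ ?_ <;> simp <;> ring

lemma cross3_mv_RZ (γ : ℝ) (a b : E3) :
    cross3 (mv (RZ γ) a) (mv (RZ γ) b) = mv (RZ γ) (cross3 a b) := by
  refine E3.ext_fin_three ?_ ?_ ?_ <;> simp only [cross3_apply_zero, cross3_apply_one,
    cross3_apply_two, mv_RZ_apply_zero, mv_RZ_apply_one, mv_RZ_apply_two]
  · ring
  · ring
  · linear_combination (a 0 * b 1 - a 1 * b 0) * Real.sin_sq_add_cos_sq γ

lemma mv_RZ_neg_mv_RZ (γ : ℝ) (v : E3) : mv (RZ (-γ)) (mv (RZ γ) v) = v := by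
  refine E3.ext_fin_three ?_ ?_ (by simp) <;>
    simp only [mv_RZ_apply_zero, mv_RZ_apply_one, Real.cos_neg, Real.sin_neg]
  · linear_combination v 0 * Real.sin_sq_add_cos_sq γ
  · linear_combination v 1 * Real.sin_sq_add_cos_sq γ

lemma mv_RZ_smul_e3 (γ t : ℝ) : mv (RZ γ) (t • e3) = t • e3 := by
  refine E3.ext_fin_three ?_ ?_ ?_ <;> simp

lemma dist_mv_RZ (γ : ℝ) (x y : E3) : dist (mv (RZ γ) x) (mv (RZ γ) y) = dist x y := by
  rw [EuclideanSpace.dist_eq, EuclideanSpace.dist_eq]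
  congr 1
  simp only [Fin.sum_univ_three, Real.dist_eq, sq_abs, mv_RZ_apply_zero, mv_RZ_apply_one,
    mv_RZ_apply_two]
  linear_combination ((x 0 - y 0) ^ 2 + (x 1 - y 1) ^ 2) * Real.sin_sq_add_cos_sq γ

lemma inner_e3_mv_RZ (γ : ℝ) (v : E3) : ⟪e3, mv (RZ γ) v⟫_ℝ = ⟪e3, v⟫_ℝ := by
  simp [PiLp.inner_apply, e3, Fin.sum_univ_three]

lemma rayAct_RZ_neg_rayAct_RZ (γ t : ℝ) (d m : E3) :
    rayAct (RZ (-γ)) ((-t) • e3) (rayAct (RZ γ) (t • e3) d m).1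
      (rayAct (RZ γ) (t • e3) d m).2 = (d, m) := by
  simp only [rayAct, mv_add, mv_RZ_neg_mv_RZ, ← cross3_mv_RZ, mv_RZ_smul_e3, neg_smul,
    cross3_neg_left, add_neg_cancel_right]

lemma screw_mem_lineOf_rayAct {γ t : ℝ} {d m p : E3} (hp : p ∈ lineOf d m) :
    mv (RZ γ) p + t • e3 ∈
      lineOf (rayAct (RZ γ) (t • e3) d m).1 (rayAct (RZ γ) (t • e3) d m).2 := by
  change cross3 _ (mv (RZ γ) d) = mv (RZ γ) m + cross3 (t • e3) (mv (RZ γ) d)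
  rw [cross3_add_left, cross3_mv_RZ, show cross3 p d = m from hp]

def zAxisDists (d m : E3) : Set ℝ :=
  {r : ℝ | ∃ p ∈ lineOf d m, ∃ s : ℝ, r = dist p (s • e3)}

lemma Dzaxis_eq_sInf_zAxisDists (d m : E3) : Dzaxis d m = sInf (zAxisDists d m) := rfl

lemma zAxisDists_subset_rayAct (γ t : ℝ) (d m : E3) :
    zAxisDists d m ⊆
      zAxisDists (rayAct (RZ γ) (t • e3) d m).1 (rayAct (RZ γ) (t • e3) d m).2 := by
  rintro _ ⟨p, hp, s, rfl⟩
  refine ⟨_, screw_mem_lineOf_rayAct hp, s + t, ?_⟩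
  rw [add_smul, dist_add_right]
  conv_rhs => rw [← mv_RZ_smul_e3 γ s, dist_mv_RZ]

lemma Dzaxis_rayAct_RZ (γ t : ℝ) (d m : E3) :
    Dzaxis (rayAct (RZ γ) (t • e3) d m).1 (rayAct (RZ γ) (t • e3) d m).2 = Dzaxis d m := by
  have hback := zAxisDists_subset_rayAct (-γ) (-t) (rayAct (RZ γ) (t • e3) d m).1
    (rayAct (RZ γ) (t • e3) d m).2
  rw [rayAct_RZ_neg_rayAct_RZ] at hback
  rw [Dzaxis_eq_sInf_zAxisDists, Dzaxis_eq_sInf_zAxisDists]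
  exact congrArg sInf (hback.antisymm (zAxisDists_subset_rayAct γ t d m))

lemma planeCoord_mv_RZ (γ : ℝ) (v : E3) :
    (mv (RZ γ) v 0 : ℂ) + (mv (RZ γ) v 1 : ℂ) * Complex.I
      = Complex.exp (γ * Complex.I) * ((v 0 : ℂ) + (v 1 : ℂ) * Complex.I) := by
  rw [Complex.exp_mul_I, mv_RZ_apply_zero, mv_RZ_apply_one]
  push_cast
  linear_combination (-(Complex.sin γ) * (v 1 : ℂ)) * Complex.I_sq

lemma planeCoord_ne_zero {d : E3} (hd : ‖d‖ = 1) (h1 : d ≠ e3) (h2 : d ≠ -e3) :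
    (d 0 : ℂ) + (d 1 : ℂ) * Complex.I ≠ 0 := by
  intro h0
  have hd0 : d 0 = 0 := by simpa using congrArg Complex.re h0
  have hd1 : d 1 = 0 := by simpa using congrArg Complex.im h0
  have hd2 : d 2 ^ 2 = 1 := by
    have := EuclideanSpace.norm_sq_eq d
    simpa [hd, Fin.sum_univ_three, hd0, hd1] using this.symm
  rcases sq_eq_one_iff.mp hd2 with hd2 | hd2
  · exact h1 (E3.ext_fin_three (by simp [hd0]) (by simp [hd1]) (by simp [hd2]))
  · exact h2 (E3.ext_fin_three (by simp [hd0]) (by simp [hd1]) (by simp [hd2]))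

lemma exp_neg_I_mul_int_mul_arg (ω : ℤ) {w : ℂ} (hw : w ≠ 0) :
    Complex.exp (-Complex.I * ω * w.arg) = (w / ‖w‖) ^ (-ω) := by
  have hunit : Complex.exp (w.arg * Complex.I) = w / ‖w‖ := by
    rw [eq_div_iff (by simpa using hw), mul_comm]
    exact Complex.norm_mul_exp_arg_mul_I w
  rw [← hunit, ← Complex.exp_int_mul]
  push_cast
  ring_nf

lemma exp_neg_I_mul_int_mul_arg_exp_mul (ω : ℤ) (γ : ℝ) {w : ℂ} (hw : w ≠ 0) :
    Complex.exp (-Complex.I * ω * (Complex.exp (γ * Complex.I) * w).arg)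
      = Complex.exp (-Complex.I * ω * γ) * Complex.exp (-Complex.I * ω * w.arg) := by
  have hnorm : ‖Complex.exp (γ * Complex.I) * w‖ = ‖w‖ := by
    rw [norm_mul, Complex.norm_exp_ofReal_mul_I, one_mul]
  rw [exp_neg_I_mul_int_mul_arg ω (mul_ne_zero (Complex.exp_ne_zero _) hw),
    exp_neg_I_mul_int_mul_arg ω hw, hnorm, mul_div_assoc, mul_zpow, ← Complex.exp_int_mul]
  push_cast
  ring_nf

/-- `κ₁((R_Z(γ), t·e₃)·x) = exp(−i·ω·γ)·κ₁(x)` for every ray `x`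
with direction `≠ ±e₃`. -/
theorem statement10 (ω : ℤ) (F : ℝ × ℝ → ℂ) (d m : E3) (h : isRay d m)
    (h1 : d ≠ e3) (h2 : d ≠ -e3) (γ t : ℝ) :
    kappa1 ω F (rayAct (RZ γ) (t • e3) d m)
      = Complex.exp (-Complex.I * (ω : ℂ) * (γ : ℂ)) * kappa1 ω F (d, m) := by
  simp only [kappa1]
  rw [Dzaxis_rayAct_RZ]
  simp only [rayAct]
  rw [inner_e3_mv_RZ, planeCoord_mv_RZ,
    exp_neg_I_mul_int_mul_arg_exp_mul ω γ (planeCoord_ne_zero h.1 h1 h2)]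
  ring
end
end

section
/- Let G be a group acting on the left on sets M₁ and M₂, with basepoints η₁ ∈ M₁ and η₂ ∈ M₂, stabilizers H₁ = {g ∈ G : g·η₁ = η₁} and H₂ = {g ∈ G : g·η₂ = η₂}, and sections s₁ : M₁ → G, s₂ : M₂ → G with s₁(y)·η₁ = y and s₂(x)·η₂ = x for all y ∈ M₁, x ∈ M₂, normalized so that s₁(η₁) = e. Define the twist functions h₁(g, y) = s₁(g·y)⁻¹·g·s₁(y) ∈ H₁ and h₂(g, x) = s₂(g·x)⁻¹·g·s₂(x) ∈ H₂, and abbreviate h₁(g) = h₁(g, η₁). Let V_in and V_out be vector spaces over a field, ρ_in : H₁ → GL(V_in) and ρ_out : H₂ → GL(V_out) group homomorphisms, S ⊆ M₁ a finite subset, and g ∈ G with g·S = S. Assume the kernel κ : M₁ → Hom(V_in, V_out) satisfies the constraint κ(h·y) = ρ_out(h) ∘ κ(y) ∘ ρ_in(h₁(h, y))⁻¹ for all h ∈ H₂ and y ∈ M₁. For a field f : M₁ → V_in define the convolution (κ⋆f)(x) = Σ_{y ∈ S} κ(s₂(x)⁻¹·y)( ρ_in(h₁(s₂(x)⁻¹·s₁(y)))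 (f(y)) ), and the induced group actions on fields (𝓛_g f)(y) = ρ_in(h₁(g⁻¹, y))⁻¹ (f(g⁻¹·y)) and (𝓛′_g F)(x) = ρ_out(h₂(g⁻¹, x))⁻¹ (F(g⁻¹·x)). Then the convolution is equivariant: κ⋆(𝓛_g f) = 𝓛′_g(κ⋆f). -/
noncomputable section

/-- The twist `h(g, y) = s(g·y)⁻¹ · g · s(y)` of a section `s : M → G`. -/
def tw {G M : Type*} [Group G] [MulAction G M] (s : M → G) (g : G) (y : M) : G :=
  (s (g • y))⁻¹ * g * s y

/-- The generalized convolution `(κ⋆f)(x) = Σ_{y ∈ S} κ(s₂(x)⁻¹·y)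
(ρ_in(h₁(s₂(x)⁻¹·s₁(y))) (f(y)))`, where `h₁(g) = h₁(g, η₁)`. -/
def conv {G M₁ M₂ K V_in V_out : Type*} [Group G] [MulAction G M₁] [MulAction G M₂]
    [Field K] [AddCommGroup V_in] [Module K V_in] [AddCommGroup V_out] [Module K V_out]
    (η₁ : M₁) (s₁ : M₁ → G) (s₂ : M₂ → G)
    (ρ_in : G → (V_in ≃ₗ[K] V_in)) (κ : M₁ → (V_in →ₗ[K] V_out))
    (S : Finset M₁) (f : M₁ → V_in) (x : M₂) : V_out :=
  ∑ y ∈ S, κ ((s₂ x)⁻¹ • y) (ρ_in (tw s₁ ((s₂ x)⁻¹ * s₁ y) η₁) (f y))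

/-- The twist of a section stabilizes the base point. -/
lemma tw_smul_base {G M : Type*} [Group G] [MulAction G M] (s : M → G) (η : M)
    (hs : ∀ y : M, s y • η = y) (g : G) (y : M) : tw s g y • η = η := by
  have h1 : tw s g y • η = (s (g • y))⁻¹ • (g • y) := by
    simp [tw, mul_smul, hs]
  rw [h1, inv_smul_eq_iff, hs]

/-- A map that is multiplicative on the stabilizer sends `1` to the identity. -/
lemma rho_one {G K V M : Type*} [Group G] [MulAction G M] [Field K] [AddCommGroup V]
    [Module K V] (η : M) (ρ : G → (V ≃ₗ[K] V))
    (hρ : ∀ h h' : G, h • η = η → h' • η = η → ρ (h * h') = (ρ h').trans (ρ h)) :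
    ρ 1 = LinearEquiv.refl K V := by
  have h1 : ρ 1 = (ρ 1).trans (ρ 1) := by
    simpa using hρ 1 1 (one_smul _ _) (one_smul _ _)
  ext v
  have := congrArg (fun e : V ≃ₗ[K] V => e v) h1
  simp only [LinearEquiv.trans_apply] at this
  have := (ρ 1).injective this.symm
  simpa using this

/-- A map that is multiplicative on the stabilizer sends inverses to `symm`. -/
lemma rho_inv {G K V M : Type*} [Group G] [MulAction G M] [Field K] [AddCommGroup V]
    [Module K V] (η : M) (ρ : G → (V ≃ₗ[K] V))
    (hρ : ∀ h h' : G, h • η = η → h' • η = η → ρ (h * h') = (ρ h').trans (ρ h))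
    (h : G) (hh : h • η = η) : ρ h⁻¹ = (ρ h).symm := by
  have hhi : h⁻¹ • η = η := by rw [← hh, inv_smul_smul, hh]
  have h1 : ρ (h⁻¹ * h) = (ρ h).trans (ρ h⁻¹) := hρ h⁻¹ h hhi hh
  rw [inv_mul_cancel, rho_one η ρ hρ] at h1
  ext v
  have := congrArg (fun e : V ≃ₗ[K] V => e ((ρ h).symm v)) h1
  simp only [LinearEquiv.trans_apply, LinearEquiv.refl_apply,
    LinearEquiv.apply_symm_apply] at this
  exact this.symm

/-- the generalized convolution with a kernel satisfying the
equivariance constraint intertwines the induced actions on fields: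
`κ⋆(𝓛_g f) = 𝓛′_g(κ⋆f)`. -/
theorem statement18 {G M₁ M₂ K V_in V_out : Type*} [Group G]
    [MulAction G M₁] [MulAction G M₂] [DecidableEq M₁] [Field K]
    [AddCommGroup V_in] [Module K V_in] [AddCommGroup V_out] [Module K V_out]
    (η₁ : M₁) (η₂ : M₂) (s₁ : M₁ → G) (s₂ : M₂ → G)
    (hs₁ : ∀ y : M₁, s₁ y • η₁ = y) (hs₂ : ∀ x : M₂, s₂ x • η₂ = x)
    (hs₁η : s₁ η₁ = 1)
    (ρ_in : G → (V_in ≃ₗ[K] V_in)) (ρ_out : G → (V_out ≃ₗ[K] V_out))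
    (hρ_in : ∀ h h' : G, h • η₁ = η₁ → h' • η₁ = η₁ →
      ρ_in (h * h') = (ρ_in h').trans (ρ_in h))
    (hρ_out : ∀ h h' : G, h • η₂ = η₂ → h' • η₂ = η₂ →
      ρ_out (h * h') = (ρ_out h').trans (ρ_out h))
    (κ : M₁ → (V_in →ₗ[K] V_out))
    (hκ : ∀ h : G, h • η₂ = η₂ → ∀ y : M₁,
      κ (h • y) = (ρ_out h).toLinearMap ∘ₗ κ y ∘ₗ (ρ_in (tw s₁ h y)).symm.toLinearMap)
    (S : Finset M₁) (g : G) (hS : S.image (fun y => g • y) = S)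
    (f : M₁ → V_in) (x : M₂) :
    conv η₁ s₁ s₂ ρ_in κ S (fun y => (ρ_in (tw s₁ g⁻¹ y)).symm (f (g⁻¹ • y))) x
      = (ρ_out (tw s₂ g⁻¹ x)).symm (conv η₁ s₁ s₂ ρ_in κ S f (g⁻¹ • x)) := by
  classical
  set h : G := tw s₂ g⁻¹ x with hh
  have hstab2 : h • η₂ = η₂ := tw_smul_base s₂ η₂ hs₂ g⁻¹ x
  have hstab2' : h⁻¹ • η₂ = η₂ := by rw [← hstab2, inv_smul_smul, hstab2]
  -- reindex the left-hand sum via y = g • z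
  unfold conv
  rw [map_sum]
  nth_rewrite 1 [← hS]
  rw [Finset.sum_image (fun a _ b _ hab => MulAction.injective g hab)]
  refine Finset.sum_congr rfl (fun z hz => ?_)
  -- notation
  set w : M₁ := (s₂ (g⁻¹ • x))⁻¹ • z with hw
  have hhinv : h⁻¹ = (s₂ x)⁻¹ * g * s₂ (g⁻¹ • x) := by
    rw [hh]; unfold tw; group
  have hkey : (s₂ x)⁻¹ • (g • z) = h⁻¹ • w := by
    rw [hw, hhinv]
    simp [mul_smul]
  have hback : g⁻¹ • g • z = z := by rw [inv_smul_smul]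
  simp only [inv_smul_smul]
  rw [hkey, hκ h⁻¹ hstab2' w, rho_inv η₂ ρ_out hρ_out h hstab2]
  simp only [LinearMap.comp_apply, LinearEquiv.coe_coe]
  congr 1
  congr 1
  -- now the inner V_in equality
  set a : G := tw s₁ h⁻¹ w with ha
  set c : G := tw s₁ g⁻¹ (g • z) with hc
  set d : G := tw s₁ ((s₂ (g⁻¹ • x))⁻¹ * s₁ z) η₁ with hd
  have hstab_a : a • η₁ = η₁ := tw_smul_base s₁ η₁ hs₁ _ _
  have hstab_c : c • η₁ = η₁ := tw_smul_base s₁ η₁ hs₁ _ _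
  have hstab_d : d • η₁ = η₁ := tw_smul_base s₁ η₁ hs₁ _ _
  have hstab_dc : (d * c) • η₁ = η₁ := by rw [mul_smul, hstab_c, hstab_d]
  -- the group identity b = a * (d * c)
  have hsmul1 : ∀ u : G, u • η₁ = (u * s₁ η₁) • η₁ := by
    intro u; rw [hs₁η, mul_one]
  have hb : tw s₁ ((s₂ x)⁻¹ * s₁ (g • z)) η₁ = a * (d * c) := by
    have e1 : ((s₂ x)⁻¹ * s₁ (g • z)) • η₁ = (s₂ x)⁻¹ • (g • z) := by
      rw [mul_smul, hs₁]
    have e2 : ((s₂ (g⁻¹ • x))⁻¹ * s₁ z) • η₁ = w := by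
      rw [mul_smul, hs₁, hw]
    have e3 : h⁻¹ • w = (s₂ x)⁻¹ • (g • z) := hkey.symm
    rw [ha, hc, hd]
    unfold tw
    rw [e1, e2, e3, hs₁η, hhinv, hback]
    group
  rw [hb, hρ_in a (d * c) hstab_a hstab_dc, hρ_in d c hstab_d hstab_c]
  simp
end
end

section
/- Let G be a group acting on the left on sets M₁ and M₂, let V be a real inner product space, and let U : G × M₂ → O(V) assign to each (g, x) a linear isometry U(g,x) of V (so ⟨U(g,x)u, U(g,x)v⟩ = ⟨u, v⟩ for all u, v ∈ V). Let N assign to each x ∈ M₂ a nonempty finite subset N(x) ⊆ M₁ such that N(g·x) equals the image of N(x) under the action of g, for all g ∈ G. Suppose f_q : M₂ → V and f_k, f_v : M₂ × M₁ → V satisfy, for all g ∈ G, x ∈ M₂, y ∈ M₁: f_q(g·x) = U(g,x)(f_q(x)), f_k(g·x, g·y) = U(g,x)(f_k(x, y)), and f_v(g·x, g·y) = U(g,x)(f_v(x, y)). Define the attention output F(x) = Σ_{y ∈ N(x)} [ exp(⟨f_q(x), f_k(x,y)⟩) / Σ_{y′ ∈ N(x)} exp(⟨f_q(x), f_k(x,y′)⟩)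 ] · f_v(x, y). Then the attention weights are invariant and the output is equivariant: F(g·x) = U(g,x)(F(x)) for all g ∈ G and x ∈ M₂. -/
noncomputable section
open scoped InnerProductSpace

/-- The softmax attention weight of `y` at query `x`. -/
def attnWeight {M₁ M₂ V : Type*} [NormedAddCommGroup V] [InnerProductSpace ℝ V]
    (N : M₂ → Finset M₁) (f_q : M₂ → V) (f_k : M₂ → M₁ → V) (x : M₂) (y : M₁) : ℝ :=
  Real.exp ⟪f_q x, f_k x y⟫_ℝ / ∑ y' ∈ N x, Real.exp ⟪f_q x, f_k x y'⟫_ℝ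

/-- The attention output
`F(x) = Σ_{y ∈ N(x)} softmax(⟨f_q(x), f_k(x,·)⟩)(y) · f_v(x, y)`. -/
def attn {M₁ M₂ V : Type*} [NormedAddCommGroup V] [InnerProductSpace ℝ V]
    (N : M₂ → Finset M₁) (f_q : M₂ → V) (f_k f_v : M₂ → M₁ → V) (x : M₂) : V :=
  ∑ y ∈ N x, attnWeight N f_q f_k x y • f_v x y

/-- with equivariant queries, keys and values (with respect to
the isometries `U(g,x)`) and an equivariant neighborhood assignment, the
attention weights are invariant and the attention output is equivariant:
`F(g·x) = U(g,x)(F(x))`. -/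
theorem statement19 {G M₁ M₂ : Type*} [Group G] [MulAction G M₁] [MulAction G M₂]
    [DecidableEq M₁] {V : Type*} [NormedAddCommGroup V] [InnerProductSpace ℝ V]
    (U : G → M₂ → (V ≃ₗᵢ[ℝ] V))
    (N : M₂ → Finset M₁) (hN : ∀ x : M₂, (N x).Nonempty)
    (hNeq : ∀ (g : G) (x : M₂), N (g • x) = (N x).image (fun y => g • y))
    (f_q : M₂ → V) (f_k f_v : M₂ → M₁ → V)
    (hq : ∀ (g : G) (x : M₂), f_q (g • x) = U g x (f_q x))
    (hk : ∀ (g : G) (x : M₂) (y : M₁), f_k (g • x) (g • y) = U g x (f_k x y))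
    (hv : ∀ (g : G) (x : M₂) (y : M₁), f_v (g • x) (g • y) = U g x (f_v x y)) :
    (∀ (g : G) (x : M₂) (y : M₁),
      attnWeight N f_q f_k (g • x) (g • y) = attnWeight N f_q f_k x y) ∧
    (∀ (g : G) (x : M₂), attn N f_q f_k f_v (g • x) = U g x (attn N f_q f_k f_v x)) := by

  have hinj : ∀ g : G, Function.Injective (fun y : M₁ => g • y) := fun g =>
    MulAction.injective g
  have hdenom : ∀ (g : G) (x : M₂),
      (∑ y' ∈ N (g • x), Real.exp ⟪f_q (g • x), f_k (g • x) y'⟫_ℝ)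
        = ∑ y' ∈ N x, Real.exp ⟪f_q x, f_k x y'⟫_ℝ := by
    intro g x
    rw [hNeq, Finset.sum_image (fun a _ b _ h => hinj g h)]
    refine Finset.sum_congr rfl fun y' _ => ?_
    rw [hq, hk, (U g x).inner_map_map]
  have hw : ∀ (g : G) (x : M₂) (y : M₁),
      attnWeight N f_q f_k (g • x) (g • y) = attnWeight N f_q f_k x y := by
    intro g x y
    unfold attnWeight
    rw [hdenom, hq, hk, (U g x).inner_map_map]
  refine ⟨hw, fun g x => ?_⟩
  unfold attn
  rw [hNeq, Finset.sum_image (fun a _ b _ h => hinj g h), map_sum]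
  refine Finset.sum_congr rfl fun y _ => ?_
  rw [hw, hv, LinearIsometryEquiv.map_smul]


end
end
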